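/- Consider the switching transition at time t₀ between two scalar ODEs: x' = g₋(t,x) for t < t₀ and x' = g₊(t,x) for t ≥ t₀, where x' = g₋(t,x) has an attractor–repeller pair (ã₋, r̃₋) and x' = g₊(t,x) has an attractor–repeller pair (ã₊, r̃₊), both equations concave in x (coercive, strictly concave uniformly in t). Then the switched equation has two uniformly separated bounded solutions (tracking, Case A) if ã₋(t₀) > r̃₊(t₀), exactly one bounded solution if ã₋(t₀) = r̃₊(t₀), and no bounded solutions (Case C) if ã₋(t₀) < r̃₊(t₀). -/

import Mathlib

/-!
A bounded solution of a uniformly concave equation `x' = g(t, x)` with a separated pair of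
bounded solutions `r < a` can only lie above the repeller forwards in time and below the
attractor backwards in time: below `r` the gap to `r`, measured in units of `a - r`, grows at
least linearly. So a bounded switched solution satisfies `r̃₊(t₀) ≤ x(t₀) ≤ ã₋(t₀)`, which rules
out the case `ã₋(t₀) < r̃₊(t₀)`, and when `ã₋(t₀) = r̃₊(t₀)` uniqueness of solutions pins `x` to
`ã₋` before `t₀` and to `r̃₊` after it. Conversely a solution starting strictly above `r` stays
between `r + m (a - r)` and `r + P (a - r)` (`0 < m < 1 < P`), which are a strict sub- and
supersolution by strict concavity; so when `ã₋(t₀) > r̃₊(t₀)`, continuing `ã₋` forwards and `r̃₊`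
backwards gives two uniformly separated bounded solutions. Backward statements follow from
forward ones under the reflection `(t, x) ↦ (-t, -x)`, which preserves concavity and swaps the
attractor and the repeller.
-/

/-- A solution of the switched equation `x' = g₋(t,x)` for `t < t₀`, `x' = g₊(t,x)` for
`t > t₀` (Carathéodory sense: continuous, differentiable off the switching time). -/
def SwitchSol (gm gp : ℝ → ℝ → ℝ) (t₀ : ℝ) (x : ℝ → ℝ) : Prop :=
  Continuous x ∧
  (∀ t < t₀, HasDerivAt x (gm t (x t)) t) ∧
  (∀ t > t₀, HasDerivAt x (gp t (x t)) t)

open Set Filter Topology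
open scoped NNReal

section ODE

variable {E : Type*} [NormedAddCommGroup E] [NormedSpace ℝ E]

def SolvesOnIci (v : ℝ → E → E) (t₀ : ℝ) (x : ℝ → E) : Prop :=
  ContinuousOn x (Ici t₀) ∧ ∀ t > t₀, HasDerivAt x (v t (x t)) t

def SolvesOnIic (v : ℝ → E → E) (t₀ : ℝ) (x : ℝ → E) : Prop :=
  ContinuousOn x (Iic t₀) ∧ ∀ t < t₀, HasDerivAt x (v t (x t)) t

lemma SolvesOnIci.hasDerivWithinAt_Ici {v : ℝ → E → E} {t₀ t : ℝ} {x : ℝ → E}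
    (hv : Continuous (Function.uncurry v)) (hx : SolvesOnIci v t₀ x) (ht : t₀ ≤ t) :
    HasDerivWithinAt x (v t (x t)) (Ici t) t := by
  rcases ht.eq_or_lt with rfl | ht
  · have hxt : ContinuousWithinAt x (Ioi t₀) t₀ := (hx.1 t₀ self_mem_Ici).mono Ioi_subset_Ici_self
    have hlim : Tendsto (fun s => v s (x s)) (𝓝[>] t₀) (𝓝 (v t₀ (x t₀))) :=
      (hv.tendsto (t₀, x t₀)).comp
        ((tendsto_id.mono_left nhdsWithin_le_nhds).prodMk_nhds hxt.tendsto)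
    refine hasDerivWithinAt_Ici_of_tendsto_deriv
      (fun s hs => (hx.2 s hs).differentiableAt.differentiableWithinAt) hxt self_mem_nhdsWithin ?_
    exact hlim.congr' (eventually_nhdsWithin_of_forall fun s hs => (hx.2 s hs).deriv.symm)
  · exact (hx.2 t ht).hasDerivWithinAt

lemma exists_forall_mem_Icc_hasDerivWithinAt_of_lipschitzWith [CompleteSpace E]
    {v : ℝ → E → E} {t₀ T L : ℝ} {K : ℝ≥0} (hT : t₀ ≤ T) (x₀ : E)
    (hK : ∀ t ∈ Icc t₀ T, LipschitzWith K (v t)) (hL : ∀ t ∈ Icc t₀ T, ∀ x, ‖v t x‖ ≤ L)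
    (hcont : ∀ x, Continuous (v · x)) :
    ∃ f : ℝ → E, f t₀ = x₀ ∧ ∀ t ∈ Icc t₀ T, HasDerivWithinAt f (v t (f t)) (Icc t₀ T) t := by
  have hPL : IsPicardLindelof v (tmin := t₀) (tmax := T) ⟨t₀, left_mem_Icc.2 hT⟩ x₀
      (L.toNNReal * (T - t₀).toNNReal) 0 L.toNNReal K :=
    { lipschitzOnWith := fun t ht => (hK t ht).lipschitzOnWith
      continuousOn := fun x _ => (hcont x).continuousOn
      norm_le := fun t ht x _ => (hL t ht x).trans (Real.le_coe_toNNReal L)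
      mul_max_le := by simp [Real.coe_toNNReal _ (sub_nonneg.2 hT), sub_nonneg.2 hT] }
  exact hPL.exists_eq_forall_mem_Icc_hasDerivWithinAt₀

theorem exists_solvesOnIci_of_lipschitzWith [CompleteSpace E] {v : ℝ → E → E} {t₀ : ℝ} (x₀ : E)
    (hlip : ∀ T, ∃ K, ∀ t ∈ Icc t₀ T, LipschitzWith K (v t))
    (hbdd : ∀ T, ∃ L, ∀ t ∈ Icc t₀ T, ∀ x, ‖v t x‖ ≤ L)
    (hcont : ∀ x, Continuous (v · x)) :
    ∃ X, X t₀ = x₀ ∧ SolvesOnIci v t₀ X := by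
  have hloc (n : ℕ) : ∃ f : ℝ → E, f t₀ = x₀ ∧
      ∀ t ∈ Icc t₀ (t₀ + n), HasDerivWithinAt f (v t (f t)) (Icc t₀ (t₀ + n)) t := by
    obtain ⟨K, hK⟩ := hlip (t₀ + n)
    obtain ⟨L, hL⟩ := hbdd (t₀ + n)
    exact exists_forall_mem_Icc_hasDerivWithinAt_of_lipschitzWith
      (le_add_of_nonneg_right n.cast_nonneg) x₀ hK hL hcont
  choose f hf₀ hf using hloc
  have hright : ∀ n : ℕ, ∀ t ∈ Ico t₀ (t₀ + n), HasDerivWithinAt (f n) (v t (f n t)) (Ici t) t :=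
    fun n t ht =>
      (hf n t (Ico_subset_Icc_self ht)).mono_of_mem_nhdsWithin (Icc_mem_nhdsGE_of_mem ht)
  have hcons : ∀ m n : ℕ, m ≤ n → EqOn (f m) (f n) (Icc t₀ (t₀ + m)) := by
    intro m n hmn
    obtain ⟨K, hK⟩ := hlip (t₀ + n)
    have hmn' : t₀ + m ≤ t₀ + n := by gcongr
    have hsub : Icc t₀ (t₀ + m) ⊆ Icc t₀ (t₀ + n) := Icc_subset_Icc_right hmn'
    exact ODE_solution_unique_of_mem_Icc_right (s := fun _ => univ)
      (fun t ht => (hK t (hsub (Ico_subset_Icc_self ht))).lipschitzOnWith)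
      (fun t ht => (hf m t ht).continuousWithinAt) (hright m) (fun _ _ => mem_univ _)
      (fun t ht => (hf n t (hsub ht)).continuousWithinAt.mono hsub)
      (fun t ht => hright n t (Ico_subset_Ico_right hmn' ht))
      (fun _ _ => mem_univ _) ((hf₀ m).trans (hf₀ n).symm)
  set X : ℝ → E := fun t => f ⌈t - t₀⌉₊ t
  have hX (n : ℕ) : EqOn X (f n) (Icc t₀ (t₀ + n)) := fun t ht =>
    hcons _ _ (Nat.ceil_le.2 (by linarith [ht.2])) ⟨ht.1, by linarith [Nat.le_ceil (t - t₀)]⟩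
  have hderiv : ∀ t ≥ t₀, HasDerivWithinAt X (v t (X t)) (Ici t₀) t := by
    intro t ht
    obtain ⟨n, hn⟩ := exists_nat_gt (t - t₀)
    have hmem : t ∈ Icc t₀ (t₀ + n) := ⟨ht, by linarith⟩
    have hnhds : Icc t₀ (t₀ + n) ∈ 𝓝[Ici t₀] t :=
      inter_mem_nhdsWithin _ (Iic_mem_nhds (by linarith))
    rw [hX n hmem]
    exact ((hf n t hmem).mono_of_mem_nhdsWithin hnhds).congr_of_eventuallyEq
      (eventually_of_mem hnhds (hX n)) (hX n hmem)
  exact ⟨X, by simpa [X] using hf₀ 0, fun t ht => (hderiv t ht).continuousWithinAt,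
    fun t ht => (hderiv t ht.le).hasDerivAt (Ici_mem_nhds ht)⟩

end ODE

theorem SolvesOnIci.eqOn {g : ℝ → ℝ → ℝ} {t₀ : ℝ} {x y : ℝ → ℝ}
    (hgc : Continuous (Function.uncurry g))
    (hlip : ∀ T B : ℝ, ∃ K, ∀ t ∈ Icc t₀ T, LipschitzOnWith K (g t) (Icc (-B) B))
    (hx : SolvesOnIci g t₀ x) (hy : SolvesOnIci g t₀ y) (h₀ : x t₀ = y t₀) :
    EqOn x y (Ici t₀) := by
  intro t ht
  have hsub : Icc t₀ t ⊆ Ici t₀ := Icc_subset_Ici_self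
  obtain ⟨Bx, hBx⟩ := isCompact_Icc.exists_bound_of_continuousOn (hx.1.mono hsub)
  obtain ⟨By, hBy⟩ := isCompact_Icc.exists_bound_of_continuousOn (hy.1.mono hsub)
  obtain ⟨K, hK⟩ := hlip t (max Bx By)
  exact ODE_solution_unique_of_mem_Icc_right (s := fun _ => Icc (-max Bx By) (max Bx By))
    (fun s hs => hK s (Ico_subset_Icc_self hs)) (hx.1.mono hsub)
    (fun s hs => hx.hasDerivWithinAt_Ici hgc hs.1)
    (fun s hs => abs_le.1 ((hBx s (Ico_subset_Icc_self hs)).trans (le_max_left _ _)))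
    (hy.1.mono hsub) (fun s hs => hy.hasDerivWithinAt_Ici hgc hs.1)
    (fun s hs => abs_le.1 ((hBy s (Ico_subset_Icc_self hs)).trans (le_max_right _ _))) h₀
    ⟨ht, le_rfl⟩

lemma SolvesOnIci.of_forall_hasDerivAt {g : ℝ → ℝ → ℝ} {x : ℝ → ℝ}
    (hx : ∀ t, HasDerivAt x (g t (x t)) t) (t₀ : ℝ) : SolvesOnIci g t₀ x :=
  ⟨fun t _ => (hx t).continuousAt.continuousWithinAt, fun t _ => hx t⟩

lemma SolvesOnIic.of_forall_hasDerivAt {g : ℝ → ℝ → ℝ} {x : ℝ → ℝ}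
    (hx : ∀ t, HasDerivAt x (g t (x t)) t) (t₀ : ℝ) : SolvesOnIic g t₀ x :=
  ⟨fun t _ => (hx t).continuousAt.continuousWithinAt, fun t _ => hx t⟩

lemma HasDerivAt.neg_comp_neg {x : ℝ → ℝ} {x' τ : ℝ} (h : HasDerivAt x x' (-τ)) :
    HasDerivAt (fun τ => -x (-τ)) x' τ := by
  simpa [Function.comp_def] using (h.comp τ (hasDerivAt_neg τ)).fun_neg

lemma SolvesOnIic.reflect {g : ℝ → ℝ → ℝ} {t₀ : ℝ} {x : ℝ → ℝ} (hx : SolvesOnIic g t₀ x) :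
    SolvesOnIci (fun τ ξ => g (-τ) (-ξ)) (-t₀) (fun τ => -x (-τ)) :=
  ⟨ContinuousOn.neg (f := fun τ => x (-τ))
      (hx.1.comp continuous_neg.continuousOn fun _ (hτ : -t₀ ≤ _) => (neg_le.1 hτ : _ ≤ t₀)),
    fun τ hτ => by simpa using (hx.2 (-τ) (neg_lt.1 hτ)).neg_comp_neg⟩

lemma SolvesOnIci.reflect {g : ℝ → ℝ → ℝ} {t₀ : ℝ} {x : ℝ → ℝ}
    (hx : SolvesOnIci (fun τ ξ => g (-τ) (-ξ)) (-t₀) x) :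
    SolvesOnIic g t₀ (fun t => -x (-t)) :=
  ⟨ContinuousOn.neg (f := fun t => x (-t))
      (hx.1.comp continuous_neg.continuousOn fun _ (ht : _ ≤ t₀) => (neg_le_neg ht : -t₀ ≤ _)),
    fun t ht => by simpa using (hx.2 (-t) (neg_lt_neg ht)).neg_comp_neg⟩

lemma ConcaveOn.le_tangent_of_hasDerivAt {f : ℝ → ℝ} {s : Set ℝ} {x y f' : ℝ}
    (hf : ConcaveOn ℝ s f) (hx : x ∈ s) (hy : y ∈ s) (hf' : HasDerivAt f f' x) :
    f y ≤ f x + f' * (y - x) := by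
  rcases lt_trichotomy x y with hxy | rfl | hxy
  · have h := hf.slope_le_of_hasDerivAt hx hy hxy hf'
    rw [slope_def_field, div_le_iff₀ (sub_pos.2 hxy)] at h
    linarith
  · simp
  · have h := hf.le_slope_of_hasDerivAt hy hx hxy hf'
    rw [slope_def_field, le_div_iff₀ (sub_pos.2 hxy)] at h
    linarith

lemma StrictConcaveOn.lt_add_mul_sub {f : ℝ → ℝ} (hf : StrictConcaveOn ℝ univ f) {x y c : ℝ}
    (hxy : x ≠ y) (hc₀ : 0 < c) (hc₁ : c < 1) :
    f x + c * (f y - f x) < f (x + c * (y - x)) := by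
  have h := hf.2 (mem_univ x) (mem_univ y) hxy (sub_pos.2 hc₁) hc₀ (by ring)
  simp only [smul_eq_mul] at h
  rw [show x + c * (y - x) = (1 - c) * x + c * y by ring]
  linarith

lemma StrictConcaveOn.add_mul_sub_lt {f : ℝ → ℝ} (hf : StrictConcaveOn ℝ univ f) {x y c : ℝ}
    (hxy : x ≠ y) (hc : 1 < c) :
    f (x + c * (y - x)) < f x + c * (f y - f x) := by
  have hc₀ : 0 < c := one_pos.trans hc
  have hxw : x ≠ x + c * (y - x) := fun h => hxy (by nlinarith [mul_pos hc₀ hc₀])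
  have h := hf.lt_add_mul_sub hxw (inv_pos.2 hc₀) (inv_lt_one_of_one_lt₀ hc)
  rw [show x + c⁻¹ * (x + c * (y - x) - x) = y by field_simp; ring] at h
  have := mul_lt_mul_of_pos_left h hc₀
  rw [mul_add, mul_inv_cancel_left₀ hc₀.ne'] at this
  linarith

lemma strictAntiOn_add_mul_of_slope_lt {φ : ℝ → ℝ} {s : Set ℝ} {δ : ℝ}
    (h : ∀ x₁ ∈ s, ∀ x₂ ∈ s, x₁ ≠ x₂ → (φ x₂ - φ x₁) / (x₂ - x₁) < -δ) :
    StrictAntiOn (fun x => φ x + δ * x) s := by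
  intro x₁ h₁ x₂ h₂ h12
  have := h x₁ h₁ x₂ h₂ h12.ne
  rw [div_lt_iff₀ (sub_pos.2 h12)] at this
  dsimp only
  linarith

theorem exists_lipschitzOnWith_of_concaveOn {g : ℝ → ℝ → ℝ}
    (hc : Continuous (Function.uncurry g)) (hconc : ∀ t, ConcaveOn ℝ univ (g t))
    (T₁ T₂ B : ℝ) : ∃ K, ∀ t ∈ Icc T₁ T₂, LipschitzOnWith K (g t) (Icc (-B) B) := by
  obtain ⟨M, hM⟩ := (isCompact_Icc.prod (isCompact_closedBall (0 : ℝ) (|B| + 2)))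
    |>.exists_bound_of_continuousOn hc.continuousOn
  refine ⟨(2 * M / 1).toNNReal, fun t ht => ?_⟩
  have hlip := ((hconc t).subset (subset_univ _) (convex_ball 0 (|B| + 2)))
    |>.lipschitzOnWith_of_abs_le one_pos fun ξ hξ => hM (t, ξ) ⟨ht, Metric.ball_subset_closedBall hξ⟩
  refine hlip.mono fun ξ hξ => ?_
  rw [Metric.mem_ball, dist_zero_right, Real.norm_eq_abs]
  linarith [abs_le.2 hξ, le_abs_self B]

lemma continuous_uncurry_projIcc {g : ℝ → ℝ → ℝ} (hc : Continuous (Function.uncurry g)) {B : ℝ}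
    (hB : -B ≤ B) : Continuous (Function.uncurry fun t ξ => g t (projIcc (-B) B hB ξ)) :=
  hc.comp (continuous_fst.prodMk (continuous_subtype_val.comp
    ((continuous_projIcc (h := hB)).comp continuous_snd)))

theorem exists_solvesOnIci_projIcc {g : ℝ → ℝ → ℝ} (hc : Continuous (Function.uncurry g))
    (hconc : ∀ t, ConcaveOn ℝ univ (g t)) {B : ℝ} (hB : -B ≤ B) (t₀ x₀ : ℝ) :
    ∃ X, X t₀ = x₀ ∧ SolvesOnIci (fun t ξ => g t (projIcc (-B) B hB ξ)) t₀ X :=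
  exists_solvesOnIci_of_lipschitzWith x₀
    (fun T => (exists_lipschitzOnWith_of_concaveOn hc hconc t₀ T B).imp fun K hK t ht =>
      (hK t ht).to_restrict.comp (LipschitzWith.projIcc hB) |>.weaken (by simp))
    (fun T => by
      obtain ⟨L, hL⟩ := (isCompact_Icc.prod isCompact_Icc).exists_bound_of_continuousOn
        (hc.continuousOn (s := Icc t₀ T ×ˢ Icc (-B) B))
      exact ⟨L, fun t ht ξ => hL (t, _) ⟨ht, Subtype.prop _⟩⟩)
    (fun ξ => (continuous_uncurry_projIcc hc hB).comp (continuous_id.prodMk continuous_const))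

structure IsUniformlyConcave (g gx : ℝ → ℝ → ℝ) : Prop where
  continuous : Continuous fun p : ℝ × ℝ => g p.1 p.2
  hasDerivAt : ∀ t x, HasDerivAt (g t) (gx t x) x
  slope_lt : ∀ j : ℕ, ∃ δ > (0 : ℝ), ∀ t : ℝ, ∀ x₁ ∈ Icc (-(j : ℝ)) j, ∀ x₂ ∈ Icc (-(j : ℝ)) j,
    x₁ ≠ x₂ → (gx t x₂ - gx t x₁) / (x₂ - x₁) < -δ

namespace IsUniformlyConcave

variable {g gx : ℝ → ℝ → ℝ}

lemma strictConcaveOn (hg : IsUniformlyConcave g gx) (t : ℝ) : StrictConcaveOn ℝ univ (g t) := by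
  refine StrictAnti.strictConcaveOn_univ_of_deriv
    (continuous_iff_continuousAt.2 fun x => (hg.hasDerivAt t x).continuousAt) ?_
  rw [show deriv (g t) = gx t from funext fun x => (hg.hasDerivAt t x).deriv]
  intro x₁ x₂ h
  obtain ⟨j, hj⟩ := exists_nat_ge (max |x₁| |x₂|)
  obtain ⟨δ, hδ, hslope⟩ := hg.slope_lt j
  have := strictAntiOn_add_mul_of_slope_lt (hslope t) (abs_le.1 ((le_max_left _ _).trans hj))
    (abs_le.1 ((le_max_right _ _).trans hj)) h
  dsimp only at this
  nlinarith

lemma exists_le_tangent_sub_sq (hg : IsUniformlyConcave g gx) (j : ℕ) :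
    ∃ δ > (0 : ℝ), ∀ t, ∀ x ∈ Icc (-(j : ℝ)) j, ∀ y ∈ Icc (-(j : ℝ)) j,
      g t y ≤ g t x + gx t x * (y - x) - δ / 2 * (y - x) ^ 2 := by
  obtain ⟨δ, hδ, hslope⟩ := hg.slope_lt j
  refine ⟨δ, hδ, fun t x hx y hy => ?_⟩
  have hh (ξ : ℝ) : HasDerivAt (fun ξ => g t ξ + δ / 2 * ξ ^ 2) (gx t ξ + δ * ξ) ξ :=
    ((hg.hasDerivAt t ξ).add ((hasDerivAt_pow 2 ξ).const_mul (δ / 2))).congr_deriv (by ring)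
  have hconc : ConcaveOn ℝ (Icc (-(j : ℝ)) j) (fun ξ => g t ξ + δ / 2 * ξ ^ 2) := by
    refine AntitoneOn.concaveOn_of_deriv (convex_Icc _ _) (HasDerivAt.continuousOn fun ξ _ => hh ξ)
      (fun ξ _ => (hh ξ).differentiableAt.differentiableWithinAt) ?_
    rw [show deriv (fun ξ => g t ξ + δ / 2 * ξ ^ 2) = fun ξ => gx t ξ + δ * ξ from
      funext fun ξ => (hh ξ).deriv]
    exact (strictAntiOn_add_mul_of_slope_lt (hslope t)).antitoneOn.mono interior_subset
  linear_combination hconc.le_tangent_of_hasDerivAt hx hy (hh x)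

lemma reflect (hg : IsUniformlyConcave g gx) :
    IsUniformlyConcave (fun τ ξ => g (-τ) (-ξ)) (fun τ ξ => -gx (-τ) (-ξ)) where
  continuous := hg.continuous.comp (show Continuous fun p : ℝ × ℝ => (-p.1, -p.2) by fun_prop)
  hasDerivAt τ ξ := by
    simpa [Function.comp_def] using (hg.hasDerivAt (-τ) (-ξ)).comp ξ (hasDerivAt_neg ξ)
  slope_lt j := by
    obtain ⟨δ, hδ, hslope⟩ := hg.slope_lt j
    refine ⟨δ, hδ, fun τ x₁ h₁ x₂ h₂ hne => ?_⟩
    have := hslope (-τ) (-x₂) ⟨by linarith [h₂.2], by linarith [h₂.1]⟩ (-x₁)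
      ⟨by linarith [h₁.2], by linarith [h₁.1]⟩ (neg_injective.ne hne.symm)
    rwa [show -x₁ - -x₂ = x₂ - x₁ by ring, show gx (-τ) (-x₁) - gx (-τ) (-x₂) =
      -gx (-τ) (-x₂) - -gx (-τ) (-x₁) by ring] at this

theorem eqOn_Ici (hg : IsUniformlyConcave g gx) {t₀ : ℝ} {x y : ℝ → ℝ}
    (hx : SolvesOnIci g t₀ x) (hy : SolvesOnIci g t₀ y) (h₀ : x t₀ = y t₀) :
    EqOn x y (Ici t₀) :=
  hx.eqOn hg.continuous (fun T B => exists_lipschitzOnWith_of_concaveOn hg.continuous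
    (fun t => (hg.strictConcaveOn t).concaveOn) t₀ T B) hy h₀

theorem eqOn_Iic (hg : IsUniformlyConcave g gx) {t₀ : ℝ} {x y : ℝ → ℝ}
    (hx : SolvesOnIic g t₀ x) (hy : SolvesOnIic g t₀ y) (h₀ : x t₀ = y t₀) :
    EqOn x y (Iic t₀) := fun t ht => by
  simpa using hg.reflect.eqOn_Ici hx.reflect hy.reflect (by simp [h₀])
    (show -t ∈ Ici (-t₀) from neg_le_neg (show t ≤ t₀ from ht))

end IsUniformlyConcave

lemma apply_add_mul_lt_of_le_tangent_sub_sq {f : ℝ → ℝ} {f' δ r a κ e : ℝ} (hδ : 0 < δ)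
    (hκ : κ < 0) (hra : r < a) (he : e ≤ -(δ / 2 * κ * (a - r)))
    (h₁ : f (r + κ * (a - r)) ≤ f r + f' * (κ * (a - r)) - δ / 2 * (κ * (a - r)) ^ 2)
    (h₂ : f a ≤ f r + f' * (a - r) - δ / 2 * (a - r) ^ 2) :
    f (r + κ * (a - r)) < f r + -e * (a - r) + κ * (f a - f r) := by
  have hu : 0 < a - r := sub_pos.2 hra
  have h₃ : κ * (f' * (a - r) - δ / 2 * (a - r) ^ 2) ≤ κ * (f a - f r) :=
    mul_le_mul_of_nonpos_left (by linarith) hκ.le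
  have h₄ : e * (a - r) ≤ -(δ / 2 * κ * (a - r)) * (a - r) := mul_le_mul_of_nonneg_right he hu.le
  have h₅ : 0 < δ / 2 * (κ * (a - r)) ^ 2 := by
    have : κ * (a - r) ≠ 0 := mul_ne_zero hκ.ne hu.ne'
    positivity
  nlinarith

structure IsSeparatedSolutionPair (g : ℝ → ℝ → ℝ) (a r : ℝ → ℝ) : Prop where
  hasDerivAt_a : ∀ t, HasDerivAt a (g t (a t)) t
  hasDerivAt_r : ∀ t, HasDerivAt r (g t (r t)) t
  bounded : ∃ M, ∀ t, |a t| ≤ M ∧ |r t| ≤ M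
  separated : ∃ d > (0 : ℝ), ∀ t, d ≤ a t - r t

namespace IsSeparatedSolutionPair

variable {g gx : ℝ → ℝ → ℝ} {a r : ℝ → ℝ}

lemma r_lt_a (hp : IsSeparatedSolutionPair g a r) (t : ℝ) : r t < a t := by
  obtain ⟨d, hd, hsep⟩ := hp.separated
  linarith [hsep t]

lemma reflect (hp : IsSeparatedSolutionPair g a r) :
    IsSeparatedSolutionPair (fun τ ξ => g (-τ) (-ξ)) (fun τ => -r (-τ)) (fun τ => -a (-τ)) where
  hasDerivAt_a τ := by simpa using (hp.hasDerivAt_r (-τ)).neg_comp_neg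
  hasDerivAt_r τ := by simpa using (hp.hasDerivAt_a (-τ)).neg_comp_neg
  bounded := hp.bounded.imp fun M hM τ => by simpa using (hM (-τ)).symm
  separated := hp.separated.imp fun d ⟨hd, hsep⟩ => ⟨hd, fun τ => by linarith [hsep (-τ)]⟩

lemma hasDerivAt_interp (hp : IsSeparatedSolutionPair g a r) {κ : ℝ → ℝ} {κ' t : ℝ}
    (hκ : HasDerivAt κ κ' t) :
    HasDerivAt (fun t => r t + κ t * (a t - r t))
      (g t (r t) + κ' * (a t - r t) + κ t * (g t (a t) - g t (r t))) t :=
  ((hp.hasDerivAt_r t).fun_add (hκ.fun_mul ((hp.hasDerivAt_a t).fun_sub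
    (hp.hasDerivAt_r t)))).congr_deriv (by ring)

/-- By strict concavity `g t` lies below its chord through `r t` and `a t` beyond `a t`, so
`r + c (a - r)` is a strict supersolution. -/
theorem le_interp_of_solvesOnIci (hp : IsSeparatedSolutionPair g a r)
    (hg : ∀ t, StrictConcaveOn ℝ univ (g t)) {v : ℝ → ℝ → ℝ}
    (hv : Continuous (Function.uncurry v)) {t₀ c : ℝ} (hc : 1 < c) {X : ℝ → ℝ}
    (hX : SolvesOnIci v t₀ X) (hvg : ∀ t, v t (r t + c * (a t - r t)) = g t (r t + c * (a t - r t)))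
    (h₀ : X t₀ ≤ r t₀ + c * (a t₀ - r t₀)) {t : ℝ} (ht : t₀ ≤ t) :
    X t ≤ r t + c * (a t - r t) :=
  image_le_of_deriv_right_lt_deriv_boundary (hX.1.mono Icc_subset_Ici_self)
    (fun s hs => hX.hasDerivWithinAt_Ici hv hs.1) h₀
    (fun s => hp.hasDerivAt_interp (hasDerivAt_const s c))
    (fun s _ hXs => by
      rw [hXs, hvg, zero_mul, add_zero]
      exact (hg s).add_mul_sub_lt (hp.r_lt_a s).ne hc)
    ⟨ht, le_rfl⟩

theorem interp_le_of_solvesOnIci (hp : IsSeparatedSolutionPair g a r)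
    (hg : ∀ t, StrictConcaveOn ℝ univ (g t)) {v : ℝ → ℝ → ℝ}
    (hv : Continuous (Function.uncurry v)) {t₀ c : ℝ} (hc₀ : 0 < c) (hc₁ : c < 1) {X : ℝ → ℝ}
    (hX : SolvesOnIci v t₀ X) (hvg : ∀ t, v t (r t + c * (a t - r t)) = g t (r t + c * (a t - r t)))
    (h₀ : r t₀ + c * (a t₀ - r t₀) ≤ X t₀) {t : ℝ} (ht : t₀ ≤ t) :
    r t + c * (a t - r t) ≤ X t :=
  image_le_of_deriv_right_lt_deriv_boundary' (B := X)
    (fun s _ => (hp.hasDerivAt_interp (hasDerivAt_const s c)).continuousAt.continuousWithinAt)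
    (fun s _ => (hp.hasDerivAt_interp (hasDerivAt_const s c)).hasDerivWithinAt) h₀
    (hX.1.mono Icc_subset_Ici_self) (fun s hs => hX.hasDerivWithinAt_Ici hv hs.1)
    (fun s _ hXs => by
      rw [← hXs, hvg, zero_mul, add_zero]
      exact (hg s).lt_add_mul_sub (hp.r_lt_a s).ne hc₀ hc₁)
    ⟨ht, le_rfl⟩

/-- Below the repeller, uniform concavity makes `r - (k₀ + e (t - t₀)) (a - r)` a strict
supersolution, so a solution starting below `r` is unbounded below. -/
theorem le_of_solvesOnIci (hp : IsSeparatedSolutionPair g a r) (hg : IsUniformlyConcave g gx)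
    {t₀ : ℝ} {x : ℝ → ℝ} (hx : SolvesOnIci g t₀ x) (hb : ∃ B, ∀ t ≥ t₀, |x t| ≤ B) :
    r t₀ ≤ x t₀ := by
  by_contra! hlt
  obtain ⟨B, hB⟩ := hb
  obtain ⟨M, hM⟩ := hp.bounded
  obtain ⟨d, hd, hsep⟩ := hp.separated
  obtain ⟨j, hj⟩ := exists_nat_ge (max B M)
  obtain ⟨δ, hδ, hgap⟩ := hg.exists_le_tangent_sub_sq j
  have hmem : ∀ ξ, |ξ| ≤ max B M → ξ ∈ Icc (-(j : ℝ)) j := fun ξ h => abs_le.1 (h.trans hj)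
  have hu (t : ℝ) : 0 < a t - r t := sub_pos.2 (hp.r_lt_a t)
  set k₀ := (r t₀ - x t₀) / (a t₀ - r t₀)
  have hk₀ : 0 < k₀ := div_pos (by linarith) (hu t₀)
  set e := δ * d * k₀ / 2
  set κ : ℝ → ℝ := fun t => -(k₀ + e * (t - t₀))
  have hκ (t : ℝ) : HasDerivAt κ (-e) t :=
    ((((hasDerivAt_id' t).sub_const t₀).const_mul e).const_add k₀).fun_neg.congr_deriv (by ring)
  have hbarrier : ∀ t ≥ t₀, x t ≤ r t + κ t * (a t - r t) := fun t ht =>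
    image_le_of_deriv_right_lt_deriv_boundary (hx.1.mono Icc_subset_Ici_self)
      (fun s hs => hx.hasDerivWithinAt_Ici hg.continuous hs.1)
      (by simp only [κ, k₀, sub_self, mul_zero, add_zero, neg_mul, div_mul_cancel₀ _ (hu t₀).ne']
          linarith)
      (fun s => hp.hasDerivAt_interp (hκ s)) (fun s hs hxs => by
        have hs' : k₀ ≤ k₀ + e * (s - t₀) := le_add_of_nonneg_right
          (mul_nonneg (by positivity) (sub_nonneg.2 hs.1))
        have hr := hmem _ ((hM s).2.trans (le_max_right _ _))
        have h₁ := hgap s (r s) hr (x s) (hmem _ ((hB s hs.1).trans (le_max_left _ _)))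
        rw [hxs] at h₁ ⊢
        rw [add_sub_cancel_left] at h₁
        refine apply_add_mul_lt_of_le_tangent_sub_sq hδ (by simp only [κ]; linarith)
          (hp.r_lt_a s) ?_ h₁ (hgap s (r s) hr (a s) (hmem _ ((hM s).1.trans (le_max_right _ _))))
        have := mul_le_mul_of_nonneg_left (mul_le_mul (hsep s) hs' hk₀.le (hu s).le)
          (by positivity : (0 : ℝ) ≤ δ / 2)
        simp only [κ]
        linarith [show e = δ * d * k₀ / 2 from rfl])
      ⟨ht, le_rfl⟩
  have hMB : 0 ≤ M + B := by
    linarith [abs_nonneg (r t₀), (hM t₀).2, abs_nonneg (x t₀), hB t₀ le_rfl]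
  have hed : 0 < e * d := by positivity
  set T := t₀ + (M + B) / (e * d)
  have hT : t₀ ≤ T := le_add_of_nonneg_right (div_nonneg hMB hed.le)
  have h₁ : e * d * (T - t₀) = M + B := by
    simp only [T]
    rw [add_sub_cancel_left, mul_div_cancel₀ _ hed.ne']
  have h₂ : (k₀ + e * (T - t₀)) * d ≤ (k₀ + e * (T - t₀)) * (a T - r T) :=
    mul_le_mul_of_nonneg_left (hsep T) (by nlinarith)
  have h₃ := hbarrier T hT
  simp only [κ] at h₃
  nlinarith [abs_le.1 (hB T hT), abs_le.1 (hM T).2, mul_pos hk₀ hd]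

theorem exists_solvesOnIci (hp : IsSeparatedSolutionPair g a r) (hg : IsUniformlyConcave g gx)
    {t₀ x₀ : ℝ} (hx₀ : r t₀ < x₀) :
    ∃ X, X t₀ = x₀ ∧ SolvesOnIci g t₀ X ∧ (∃ B, ∀ t ≥ t₀, |X t| ≤ B) ∧
      ∃ e > (0 : ℝ), ∀ t ≥ t₀, r t + e ≤ X t := by
  obtain ⟨M, hM⟩ := hp.bounded
  obtain ⟨d, hd, hsep⟩ := hp.separated
  have hu (t : ℝ) : 0 < a t - r t := sub_pos.2 (hp.r_lt_a t)
  set p₀ := (x₀ - r t₀) / (a t₀ - r t₀)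
  have hx₀p : x₀ = r t₀ + p₀ * (a t₀ - r t₀) := by
    rw [div_mul_cancel₀ _ (hu t₀).ne']; ring
  have hp₀ : 0 < p₀ := div_pos (by linarith) (hu t₀)
  obtain ⟨m, hm₀, hm₁, hmp⟩ : ∃ m, 0 < m ∧ m < 1 ∧ m ≤ p₀ :=
    ⟨min p₀ 1 / 2, by positivity, by linarith [min_le_right p₀ 1], by linarith [min_le_left p₀ 1]⟩
  obtain ⟨P, hP, hpP⟩ : ∃ P, 1 < P ∧ p₀ ≤ P := ⟨p₀ + 1, by linarith, by linarith⟩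
  set B := M + 2 * P * M
  have hstrip : ∀ t, ∀ κ ∈ Icc (0 : ℝ) P, |r t + κ * (a t - r t)| ≤ B := by
    intro t κ hκ
    have ha := abs_le.1 (hM t).1
    have hr := abs_le.1 (hM t).2
    have h₁ : 0 ≤ κ * (a t - r t) := mul_nonneg hκ.1 (hu t).le
    have h₂ : κ * (a t - r t) ≤ P * (2 * M) := mul_le_mul hκ.2 (by linarith) (hu t).le (by linarith)
    rw [abs_le]; constructor <;> nlinarith
  have hB : -B ≤ B := neg_le_self ((abs_nonneg _).trans (hstrip 0 0 ⟨le_rfl, by linarith⟩))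
  -- The clamped field is globally Lipschitz; the barriers keep `X` in `[-B, B]`, where it is `g`.
  have hv (t ξ : ℝ) (h : |ξ| ≤ B) : g t (projIcc (-B) B hB ξ : ℝ) = g t ξ := by
    rw [projIcc_of_mem hB (abs_le.1 h)]
  obtain ⟨X, hX₀, hX⟩ := exists_solvesOnIci_projIcc hg.continuous
    (fun t => (hg.strictConcaveOn t).concaveOn) hB t₀ x₀
  have hvc := continuous_uncurry_projIcc hg.continuous hB
  have hupper (t : ℝ) (ht : t₀ ≤ t) : X t ≤ r t + P * (a t - r t) :=
    hp.le_interp_of_solvesOnIci hg.strictConcaveOn hvc hP hX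
      (fun s => hv _ _ (hstrip s P ⟨by positivity, le_rfl⟩))
      (by rw [hX₀, hx₀p]; gcongr; exact (hu t₀).le) ht
  have hlower (t : ℝ) (ht : t₀ ≤ t) : r t + m * (a t - r t) ≤ X t :=
    hp.interp_le_of_solvesOnIci hg.strictConcaveOn hvc hm₀ hm₁ hX
      (fun s => hv _ _ (hstrip s m ⟨hm₀.le, by linarith⟩))
      (by rw [hX₀, hx₀p]; gcongr; exact (hu t₀).le) ht
  have hXB (t : ℝ) (ht : t₀ ≤ t) : |X t| ≤ B := abs_le.2
    ⟨(abs_le.1 (hstrip t m ⟨hm₀.le, by linarith⟩)).1.trans (hlower t ht),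
      (hupper t ht).trans (abs_le.1 (hstrip t P ⟨by positivity, le_rfl⟩)).2⟩
  refine ⟨X, hX₀, ⟨hX.1, fun t ht => ?_⟩, ⟨B, hXB⟩, m * d, by positivity, fun t ht => ?_⟩
  · simpa only [hv _ _ (hXB t ht.le)] using hX.2 t ht
  · nlinarith [hlower t ht, hsep t]

theorem le_of_solvesOnIic (hp : IsSeparatedSolutionPair g a r) (hg : IsUniformlyConcave g gx)
    {t₀ : ℝ} {x : ℝ → ℝ} (hx : SolvesOnIic g t₀ x) (hb : ∃ B, ∀ t ≤ t₀, |x t| ≤ B) :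
    x t₀ ≤ a t₀ := by
  simpa using hp.reflect.le_of_solvesOnIci hg.reflect hx.reflect
    (hb.imp fun B hB τ hτ => by simpa using hB (-τ) (neg_le.1 hτ))

theorem exists_solvesOnIic (hp : IsSeparatedSolutionPair g a r) (hg : IsUniformlyConcave g gx)
    {t₀ x₀ : ℝ} (hx₀ : x₀ < a t₀) :
    ∃ X, X t₀ = x₀ ∧ SolvesOnIic g t₀ X ∧ (∃ B, ∀ t ≤ t₀, |X t| ≤ B) ∧
      ∃ e > (0 : ℝ), ∀ t ≤ t₀, X t + e ≤ a t := by
  obtain ⟨Y, hY₀, hY, ⟨B, hB⟩, e, he, hYe⟩ :=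
    hp.reflect.exists_solvesOnIci hg.reflect (t₀ := -t₀) (x₀ := -x₀) (by simpa using hx₀)
  refine ⟨fun t => -Y (-t), by simp [hY₀], hY.reflect,
    ⟨B, fun t ht => by simpa using hB (-t) (neg_le_neg ht)⟩, e, he, fun t ht => ?_⟩
  have := hYe (-t) (neg_le_neg ht)
  simp only [neg_neg] at this
  linarith

end IsSeparatedSolutionPair

lemma switchSol_ite {gm gp : ℝ → ℝ → ℝ} {t₀ : ℝ} {x y : ℝ → ℝ}
    (hx : SolvesOnIic gm t₀ x) (hy : SolvesOnIci gp t₀ y) (h : x t₀ = y t₀) :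
    SwitchSol gm gp t₀ (fun t => if t ≤ t₀ then x t else y t) := by
  refine ⟨continuous_if_le continuous_id continuous_const hx.1 hy.1 fun t ht => ht ▸ h,
    fun t ht => ?_, fun t ht => ?_⟩
  · dsimp only
    rw [if_pos ht.le]
    exact (hx.2 t ht).congr_of_eventuallyEq
      (eventually_of_mem (Iio_mem_nhds ht) fun s hs => if_pos (le_of_lt hs))
  · dsimp only
    rw [if_neg ht.not_ge]
    exact (hy.2 t ht).congr_of_eventuallyEq
      (eventually_of_mem (Ioi_mem_nhds ht) fun s hs => if_neg (not_le.2 hs))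

namespace SwitchSol

variable {gm gp gmx gpx : ℝ → ℝ → ℝ} {amm rmm amp rmp : ℝ → ℝ} {t₀ : ℝ}

lemma solvesOnIic {x : ℝ → ℝ} (hx : SwitchSol gm gp t₀ x) : SolvesOnIic gm t₀ x :=
  ⟨hx.1.continuousOn, hx.2.1⟩

lemma solvesOnIci {x : ℝ → ℝ} (hx : SwitchSol gm gp t₀ x) : SolvesOnIci gp t₀ x :=
  ⟨hx.1.continuousOn, hx.2.2⟩

theorem mem_Icc_of_bounded (hgm : IsUniformlyConcave gm gmx) (hgp : IsUniformlyConcave gp gpx)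
    (hpm : IsSeparatedSolutionPair gm amm rmm) (hpp : IsSeparatedSolutionPair gp amp rmp)
    {x : ℝ → ℝ} (hx : SwitchSol gm gp t₀ x) (hb : ∃ M, ∀ t, |x t| ≤ M) :
    x t₀ ∈ Icc (rmp t₀) (amm t₀) :=
  ⟨hpp.le_of_solvesOnIci hgp hx.solvesOnIci (hb.imp fun _ hM t _ => hM t),
    hpm.le_of_solvesOnIic hgm hx.solvesOnIic (hb.imp fun _ hM t _ => hM t)⟩

end SwitchSol

section Switching

variable {gm gp gmx gpx : ℝ → ℝ → ℝ} {amm rmm amp rmp : ℝ → ℝ} {t₀ : ℝ}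

theorem exists_separated_switchSol_of_lt (hgm : IsUniformlyConcave gm gmx)
    (hgp : IsUniformlyConcave gp gpx) (hpm : IsSeparatedSolutionPair gm amm rmm)
    (hpp : IsSeparatedSolutionPair gp amp rmp) (h : rmp t₀ < amm t₀) :
    ∃ x y : ℝ → ℝ, SwitchSol gm gp t₀ x ∧ SwitchSol gm gp t₀ y ∧
      (∃ M, ∀ t, |x t| ≤ M ∧ |y t| ≤ M) ∧ ∃ d > (0 : ℝ), ∀ t, d ≤ |x t - y t| := by
  obtain ⟨X, hX₀, hX, ⟨BX, hBX⟩, eX, heX, hXsep⟩ := hpp.exists_solvesOnIci hgp h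
  obtain ⟨Y, hY₀, hY, ⟨BY, hBY⟩, eY, heY, hYsep⟩ := hpm.exists_solvesOnIic hgm h
  obtain ⟨Mm, hMm⟩ := hpm.bounded
  obtain ⟨Mp, hMp⟩ := hpp.bounded
  refine ⟨_, _, switchSol_ite (.of_forall_hasDerivAt hpm.hasDerivAt_a t₀) hX hX₀.symm,
    switchSol_ite hY (.of_forall_hasDerivAt hpp.hasDerivAt_r t₀) hY₀,
    ⟨max (max Mm BX) (max BY Mp), fun t => ?_⟩, min eX eY, lt_min heX heY, fun t => ?_⟩
  all_goals rcases le_or_gt t t₀ with ht | ht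
  · simp only [if_pos ht]
    exact ⟨le_max_of_le_left (le_max_of_le_left (hMm t).1),
      le_max_of_le_right (le_max_of_le_left (hBY t ht))⟩
  · simp only [if_neg ht.not_ge]
    exact ⟨le_max_of_le_left (le_max_of_le_right (hBX t ht.le)),
      le_max_of_le_right (le_max_of_le_right (hMp t).2)⟩
  · simp only [if_pos ht]
    linarith [hYsep t ht, min_le_right eX eY, le_abs_self (amm t - Y t)]
  · simp only [if_neg ht.not_ge]
    linarith [hXsep t ht.le, min_le_left eX eY, le_abs_self (X t - rmp t)]

theorem existsUnique_switchSol_of_eq (hgm : IsUniformlyConcave gm gmx)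
    (hgp : IsUniformlyConcave gp gpx) (hpm : IsSeparatedSolutionPair gm amm rmm)
    (hpp : IsSeparatedSolutionPair gp amp rmp) (h : amm t₀ = rmp t₀) :
    ∃ x : ℝ → ℝ, (SwitchSol gm gp t₀ x ∧ ∃ M, ∀ t, |x t| ≤ M) ∧
      ∀ y : ℝ → ℝ, SwitchSol gm gp t₀ y → (∃ M, ∀ t, |y t| ≤ M) → y = x := by
  have ha : SolvesOnIic gm t₀ amm := .of_forall_hasDerivAt hpm.hasDerivAt_a t₀
  have hr : SolvesOnIci gp t₀ rmp := .of_forall_hasDerivAt hpp.hasDerivAt_r t₀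
  obtain ⟨Mm, hMm⟩ := hpm.bounded
  obtain ⟨Mp, hMp⟩ := hpp.bounded
  refine ⟨_, ⟨switchSol_ite ha hr h, max Mm Mp, fun t => ?_⟩, fun y hy hb => ?_⟩
  · split_ifs
    exacts [le_max_of_le_left (hMm t).1, le_max_of_le_right (hMp t).2]
  · have hy₀ := hy.mem_Icc_of_bounded hgm hgp hpm hpp hb
    have hya : y t₀ = amm t₀ := le_antisymm hy₀.2 (h ▸ hy₀.1)
    funext t
    rcases le_or_gt t t₀ with ht | ht
    · rw [if_pos ht]
      exact hgm.eqOn_Iic hy.solvesOnIic ha hya ht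
    · rw [if_neg ht.not_ge]
      exact hgp.eqOn_Ici hy.solvesOnIci hr (hya.trans h) ht.le

end Switching

theorem switching_tracking_criterion_general
    (gm gp gmx gpx : ℝ → ℝ → ℝ) (t₀ : ℝ)
    (hcm : Continuous fun p : ℝ × ℝ => gm p.1 p.2)
    (hcp : Continuous fun p : ℝ × ℝ => gp p.1 p.2)
    (hdm : ∀ t x, HasDerivAt (gm t) (gmx t x) x)
    (hdp : ∀ t x, HasDerivAt (gp t) (gpx t x) x)
    (hconcm : ∀ j : ℕ, ∃ δ > (0:ℝ), ∀ t : ℝ,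
      ∀ x₁ ∈ Set.Icc (-(j:ℝ)) (j:ℝ), ∀ x₂ ∈ Set.Icc (-(j:ℝ)) (j:ℝ), x₁ ≠ x₂ →
        (gmx t x₂ - gmx t x₁) / (x₂ - x₁) < -δ)
    (hconcp : ∀ j : ℕ, ∃ δ > (0:ℝ), ∀ t : ℝ,
      ∀ x₁ ∈ Set.Icc (-(j:ℝ)) (j:ℝ), ∀ x₂ ∈ Set.Icc (-(j:ℝ)) (j:ℝ), x₁ ≠ x₂ →
        (gpx t x₂ - gpx t x₁) / (x₂ - x₁) < -δ)
    (amm rmm amp rmp : ℝ → ℝ)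
    -- attractor–repeller pair of the past equation
    (hsolam : ∀ t, HasDerivAt amm (gm t (amm t)) t)
    (hsolrm : ∀ t, HasDerivAt rmm (gm t (rmm t)) t)
    (hbddm : ∃ M, ∀ t, |amm t| ≤ M ∧ |rmm t| ≤ M)
    (hsepm : ∃ d > (0:ℝ), ∀ t, d ≤ amm t - rmm t)
    -- attractor–repeller pair of the future equation
    (hsolap : ∀ t, HasDerivAt amp (gp t (amp t)) t)
    (hsolrp : ∀ t, HasDerivAt rmp (gp t (rmp t)) t)
    (hbddp : ∃ M, ∀ t, |amp t| ≤ M ∧ |rmp t| ≤ M)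
    (hsepp : ∃ d > (0:ℝ), ∀ t, d ≤ amp t - rmp t) :
    (amm t₀ > rmp t₀ →
      ∃ x y : ℝ → ℝ, SwitchSol gm gp t₀ x ∧ SwitchSol gm gp t₀ y ∧
        (∃ M, ∀ t, |x t| ≤ M ∧ |y t| ≤ M) ∧
        (∃ d > (0:ℝ), ∀ t, d ≤ |x t - y t|)) ∧
    (amm t₀ = rmp t₀ →
      ∃ x : ℝ → ℝ, (SwitchSol gm gp t₀ x ∧ (∃ M, ∀ t, |x t| ≤ M)) ∧
        ∀ y : ℝ → ℝ, SwitchSol gm gp t₀ y → (∃ M, ∀ t, |y t| ≤ M) → y = x) ∧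
    (amm t₀ < rmp t₀ →
      ¬ ∃ x : ℝ → ℝ, SwitchSol gm gp t₀ x ∧ (∃ M, ∀ t, |x t| ≤ M)) := by
  have hgm : IsUniformlyConcave gm gmx := ⟨hcm, hdm, hconcm⟩
  have hgp : IsUniformlyConcave gp gpx := ⟨hcp, hdp, hconcp⟩
  have hpm : IsSeparatedSolutionPair gm amm rmm := ⟨hsolam, hsolrm, hbddm, hsepm⟩
  have hpp : IsSeparatedSolutionPair gp amp rmp := ⟨hsolap, hsolrp, hbddp, hsepp⟩
  refine ⟨exists_separated_switchSol_of_lt hgm hgp hpm hpp,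
    existsUnique_switchSol_of_eq hgm hgp hpm hpp, ?_⟩
  rintro hlt ⟨x, hx, hb⟩
  have hx₀ := hx.mem_Icc_of_bounded hgm hgp hpm hpp hb
  exact (hx₀.1.trans hx₀.2).not_gt hlt

/-- tipping/tracking criterion for switching at time `t₀` between two
concave equations with attractor–repeller pairs `(ã₋, r̃₋)` and `(ã₊, r̃₊)`: the
switched equation has two uniformly separated bounded solutions if `ã₋(t₀) > r̃₊(t₀)`,
exactly one bounded solution if `ã₋(t₀) = r̃₊(t₀)`, and none if `ã₋(t₀) < r̃₊(t₀)`. -/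
theorem switching_tracking_criterion
    (gm gp gmx gpx : ℝ → ℝ → ℝ) (t₀ : ℝ)
    (hcm : Continuous fun p : ℝ × ℝ => gm p.1 p.2)
    (hcp : Continuous fun p : ℝ × ℝ => gp p.1 p.2)
    (hdm : ∀ t x, HasDerivAt (gm t) (gmx t x) x)
    (hdp : ∀ t x, HasDerivAt (gp t) (gpx t x) x)
    (hcoerm : ∃ δ > (0:ℝ), ∃ ρ₀ > (0:ℝ), ∀ t x : ℝ, ρ₀ ≤ |x| → gm t x ≤ -δ * |x|)
    (hcoerp : ∃ δ > (0:ℝ), ∃ ρ₀ > (0:ℝ), ∀ t x : ℝ, ρ₀ ≤ |x| → gp t x ≤ -δ * |x|)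
    (hconcm : ∀ j : ℕ, ∃ δ > (0:ℝ), ∀ t : ℝ,
      ∀ x₁ ∈ Set.Icc (-(j:ℝ)) (j:ℝ), ∀ x₂ ∈ Set.Icc (-(j:ℝ)) (j:ℝ), x₁ ≠ x₂ →
        (gmx t x₂ - gmx t x₁) / (x₂ - x₁) < -δ)
    (hconcp : ∀ j : ℕ, ∃ δ > (0:ℝ), ∀ t : ℝ,
      ∀ x₁ ∈ Set.Icc (-(j:ℝ)) (j:ℝ), ∀ x₂ ∈ Set.Icc (-(j:ℝ)) (j:ℝ), x₁ ≠ x₂ →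
        (gpx t x₂ - gpx t x₁) / (x₂ - x₁) < -δ)
    (amm rmm amp rmp : ℝ → ℝ)
    -- attractor–repeller pair of the past equation
    (hsolam : ∀ t, HasDerivAt amm (gm t (amm t)) t)
    (hsolrm : ∀ t, HasDerivAt rmm (gm t (rmm t)) t)
    (hbddm : ∃ M, ∀ t, |amm t| ≤ M ∧ |rmm t| ≤ M)
    (hsepm : ∃ d > (0:ℝ), ∀ t, d ≤ amm t - rmm t)
    (hhypam : ∃ k ≥ (1:ℝ), ∃ β > (0:ℝ), ∀ s t : ℝ, s ≤ t →
      Real.exp (∫ r in s..t, gmx r (amm r)) ≤ k * Real.exp (-β * (t - s)))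
    (hhyprm : ∃ k ≥ (1:ℝ), ∃ β > (0:ℝ), ∀ s t : ℝ, t ≤ s →
      Real.exp (∫ r in s..t, gmx r (rmm r)) ≤ k * Real.exp (β * (t - s)))
    -- attractor–repeller pair of the future equation
    (hsolap : ∀ t, HasDerivAt amp (gp t (amp t)) t)
    (hsolrp : ∀ t, HasDerivAt rmp (gp t (rmp t)) t)
    (hbddp : ∃ M, ∀ t, |amp t| ≤ M ∧ |rmp t| ≤ M)
    (hsepp : ∃ d > (0:ℝ), ∀ t, d ≤ amp t - rmp t)
    (hhypap : ∃ k ≥ (1:ℝ), ∃ β > (0:ℝ), ∀ s t : ℝ, s ≤ t →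
      Real.exp (∫ r in s..t, gpx r (amp r)) ≤ k * Real.exp (-β * (t - s)))
    (hhyprp : ∃ k ≥ (1:ℝ), ∃ β > (0:ℝ), ∀ s t : ℝ, t ≤ s →
      Real.exp (∫ r in s..t, gpx r (rmp r)) ≤ k * Real.exp (β * (t - s))) :
    (amm t₀ > rmp t₀ →
      ∃ x y : ℝ → ℝ, SwitchSol gm gp t₀ x ∧ SwitchSol gm gp t₀ y ∧
        (∃ M, ∀ t, |x t| ≤ M ∧ |y t| ≤ M) ∧
        (∃ d > (0:ℝ), ∀ t, d ≤ |x t - y t|)) ∧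
    (amm t₀ = rmp t₀ →
      ∃ x : ℝ → ℝ, (SwitchSol gm gp t₀ x ∧ (∃ M, ∀ t, |x t| ≤ M)) ∧
        ∀ y : ℝ → ℝ, SwitchSol gm gp t₀ y → (∃ M, ∀ t, |y t| ≤ M) → y = x) ∧
    (amm t₀ < rmp t₀ →
      ¬ ∃ x : ℝ → ℝ, SwitchSol gm gp t₀ x ∧ (∃ M, ∀ t, |x t| ≤ M)) :=
  switching_tracking_criterion_general gm gp gmx gpx t₀ hcm hcp hdm hdp hconcm hconcp amm rmm amp
    rmp hsolam hsolrm hbddm hsepm hsolap hsolrp hbddp hsepp
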